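/- Extension of the discrete Gaussian tail bound to real thresholds: For all reals x ≥ 1 and σ > 0, if X is distributed according to the discrete Gaussian N_ℤ(σ²) and Z is distributed according to the centered real Gaussian measure N(0, σ²), then Pr[X > x] ≤ Pr[Z > ⌊x⌋], where ⌊x⌋ denotes the floor of x. -/

import Mathlib

open scoped ENNReal
open ProbabilityTheory

/-- The discrete Gaussian mass function `N_ℤ(v)` (real-valued) with variance
parameter `v = σ²`. -/
noncomputable def discreteGaussianPMF (v : ℝ) (x : ℤ) : ℝ :=
  Real.exp (-(x : ℝ) ^ 2 / (2 * v)) / ∑' y : ℤ, Real.exp (-(y : ℝ) ^ 2 / (2 * v))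

/-!
By Poisson summation the normaliser of `N_ℤ(σ²)` is at least `√(2πσ²)`, so the mass of an integer
`z` is at most the Gaussian density at `z`. For `z ≥ 1` the density is decreasing on `(z - 1, z]`,
so that mass is at most the Gaussian measure of `(z - 1, z]`. For `z > x` these disjoint intervals
all lie above `⌊x⌋`.
-/

open MeasureTheory Real Set Function
open scoped NNReal

lemma summable_exp_neg_mul_int_sq {c : ℝ} (hc : 0 < c) :
    Summable fun n : ℤ => exp (-c * n ^ 2) := by
  have hnat : Summable fun n : ℕ => exp (-c * (n : ℝ) ^ 2) :=
    summable_exp_nat_mul_of_ge (neg_neg_of_pos hc) fun n => by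
      exact_mod_cast Nat.le_self_pow two_ne_zero n
  exact .of_nat_of_neg hnat (by simpa using hnat)

lemma one_le_tsum_exp_neg_mul_int_sq {c : ℝ} (hc : 0 < c) :
    1 ≤ ∑' n : ℤ, exp (-c * n ^ 2) := by
  simpa using (summable_exp_neg_mul_int_sq hc).le_tsum 0 fun _ _ => (exp_pos _).le

/- Poisson summation: the sum equals `√(2πv) ∑ₙ exp(-2π²v n²)`, and the dual sum is at least its
`n = 0` term. -/
lemma sqrt_two_pi_mul_le_tsum_exp_neg_int_sq {v : ℝ} (hv : 0 < v) :
    √(2 * π * v) ≤ ∑' n : ℤ, exp (-(n : ℝ) ^ 2 / (2 * v)) := by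
  have ha : 0 < (2 * π * v)⁻¹ := by positivity
  have hpoisson := tsum_exp_neg_mul_int_sq ha
  have hscale : (1 : ℝ) / (2 * π * v)⁻¹ ^ (1 / 2 : ℝ) = √(2 * π * v) := by
    rw [← sqrt_eq_rpow, sqrt_inv, one_div, inv_inv]
  have hlhs : ∀ n : ℤ, -π * (2 * π * v)⁻¹ * (n : ℝ) ^ 2 = -(n : ℝ) ^ 2 / (2 * v) := fun n => by
    field_simp
  simp only [hlhs, hscale, neg_div _ π] at hpoisson
  rw [hpoisson]
  exact le_mul_of_one_le_right (sqrt_nonneg _) (one_le_tsum_exp_neg_mul_int_sq (by positivity))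

lemma discreteGaussianPMF_nonneg (v : ℝ) (z : ℤ) : 0 ≤ discreteGaussianPMF v z :=
  div_nonneg (exp_pos _).le (tsum_nonneg fun _ => (exp_pos _).le)

lemma summable_discreteGaussianPMF {v : ℝ} (hv : 0 < v) : Summable (discreteGaussianPMF v) := by
  have hc : 0 < (2 * v)⁻¹ := by positivity
  refine ((summable_exp_neg_mul_int_sq hc).div_const
    (∑' y : ℤ, exp (-(y : ℝ) ^ 2 / (2 * v)))).congr fun n => ?_
  rw [discreteGaussianPMF, neg_mul, inv_mul_eq_div, ← neg_div]

lemma discreteGaussianPMF_le_gaussianPDFReal {v : ℝ≥0} (hv : v ≠ 0) (z : ℤ) :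
    discreteGaussianPMF v z ≤ gaussianPDFReal 0 v z := by
  have hv' : (0 : ℝ) < v := NNReal.coe_pos.mpr (pos_iff_ne_zero.mpr hv)
  rw [discreteGaussianPMF, gaussianPDFReal, sub_zero, inv_mul_eq_div]
  gcongr
  exact sqrt_two_pi_mul_le_tsum_exp_neg_int_sq hv'

lemma antitoneOn_gaussianPDFReal_zero (v : ℝ≥0) : AntitoneOn (gaussianPDFReal 0 v) (Ici 0) := by
  intro s hs t _ hst
  simp only [gaussianPDFReal, sub_zero]
  gcongr

lemma ofReal_gaussianPDFReal_mul_volume_le_gaussianReal {v : ℝ≥0} (hv : v ≠ 0) {a b : ℝ}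
    (ha : 0 ≤ a) :
    ENNReal.ofReal (gaussianPDFReal 0 v b) * volume (Ioc a b) ≤ gaussianReal 0 v (Ioc a b) := by
  rw [gaussianReal_apply 0 hv, ← setLIntegral_const]
  refine setLIntegral_mono (measurable_gaussianPDF 0 v) fun t ht => ?_
  exact ENNReal.ofReal_le_ofReal
    (antitoneOn_gaussianPDFReal_zero v (ha.trans ht.1.le) (ha.trans (ht.1.le.trans ht.2)) ht.2)

lemma tsum_ite_lt_le_measure_Ioi_floor (μ : Measure ℝ) {x : ℝ} {f : ℤ → ℝ≥0∞}
    (hf : ∀ z : ℤ, x < z → f z ≤ μ (Ioc ((z : ℝ) - 1) z)) :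
    ∑' z : ℤ, (if x < z then f z else 0) ≤ μ (Ioi ⌊x⌋) := by
  set s : ℤ → Set ℝ := fun z => Ioi (⌊x⌋ : ℝ) ∩ Ioc ((z : ℝ) - 1) z
  have hterm : ∀ z : ℤ, (if x < z then f z else 0) ≤ μ (s z) := by
    intro z
    split_ifs with hz
    · have hfloor : (⌊x⌋ : ℝ) ≤ z - 1 := by
        rw [le_sub_iff_add_le]
        exact_mod_cast Int.floor_lt.mpr hz
      rw [show s z = Ioc ((z : ℝ) - 1) z from inter_eq_right.mpr fun t ht => hfloor.trans_lt ht.1]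
      exact hf z hz
    · exact bot_le
  have hdisj : Pairwise (Disjoint on s) := by
    have hIoc := pairwise_disjoint_Ioc_add_intCast (-1 : ℝ)
    refine hIoc.mono fun i j h => h.mono ?_ ?_ <;>
      exact inter_subset_right.trans_eq (by ring_nf)
  calc ∑' z : ℤ, (if x < z then f z else 0)
      ≤ ∑' z, μ (s z) := ENNReal.tsum_le_tsum hterm
    _ ≤ μ (⋃ z, s z) :=
        tsum_meas_le_meas_iUnion_of_disjoint μ (fun _ => measurableSet_Ioi.inter measurableSet_Ioc)
          hdisj
    _ ≤ μ (Ioi ⌊x⌋) := measure_mono (iUnion_subset fun _ => inter_subset_left)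

/-- Extension of the discrete Gaussian tail bound to real thresholds:
for real `x ≥ 1`, `Pr[X > x] ≤ Pr[Z > ⌊x⌋]` where `X ∼ N_ℤ(σ²)`, `Z ∼ N(0, σ²)`. -/
theorem discreteGaussian_tail_le_gaussian_tail_real (x : ℝ) (hx : 1 ≤ x)
    (σ : ℝ) (hσ : 0 < σ) :
    ENNReal.ofReal (∑' z : ℤ, if x < (z : ℝ) then discreteGaussianPMF (σ ^ 2) z else 0)
      ≤ gaussianReal 0 ((σ ^ 2).toNNReal) {z : ℝ | (⌊x⌋ : ℝ) < z} := by
  set v := (σ ^ 2).toNNReal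
  have hv : (v : ℝ) = σ ^ 2 := coe_toNNReal _ (sq_nonneg σ)
  have hv0 : v ≠ 0 := by simp [v, hσ.ne']
  rw [← hv]
  have hnonneg : ∀ z : ℤ, 0 ≤ if x < (z : ℝ) then discreteGaussianPMF v z else 0 := fun z => by
    split_ifs
    exacts [discreteGaussianPMF_nonneg _ _, le_rfl]
  have hsum := (summable_discreteGaussianPMF (hv ▸ pow_pos hσ 2)).of_nonneg_of_le hnonneg
    fun z => by split_ifs; exacts [le_rfl, discreteGaussianPMF_nonneg _ _]
  rw [ENNReal.ofReal_tsum_of_nonneg hnonneg hsum]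
  simp only [apply_ite ENNReal.ofReal, ENNReal.ofReal_zero]
  refine tsum_ite_lt_le_measure_Ioi_floor _ fun z hz => ?_
  calc ENNReal.ofReal (discreteGaussianPMF v z)
      ≤ ENNReal.ofReal (gaussianPDFReal 0 v z) * volume (Ioc ((z : ℝ) - 1) z) := by
        rw [Real.volume_Ioc, sub_sub_cancel, ENNReal.ofReal_one, mul_one]
        exact ENNReal.ofReal_le_ofReal (discreteGaussianPMF_le_gaussianPDFReal hv0 z)
    _ ≤ gaussianReal 0 v (Ioc ((z : ℝ) - 1) z) :=
        ofReal_gaussianPDFReal_mul_volume_le_gaussianReal hv0 (by linarith)
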